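/- arXiv:1810.11008 — 2 statements merged into one kernel-verified Lean document; each statement's English description precedes it below -/
import Mathlib

section
/- There is a constant C, independent of h, k, n, epsilon^n and e^n, such that for j = 1, 2, 3: ||(rho^{n,j})_x|| + ||(r^{n,j})_x|| <= (C / h^{j+1}) (||epsilon^n|| + ||e^n||). -/
open MeasureTheory Set

noncomputable section

/-- The L²(0,1) inner product. -/
def ip (f g : ℝ → ℝ) : ℝ := ∫ x in (0:ℝ)..1, f x * g x

/-- The L²(0,1) norm. -/
def L2 (f : ℝ → ℝ) : ℝ := Real.sqrt (ip f f)

/-- The L^∞(0,1) norm. -/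
def Linf (f : ℝ → ℝ) : ℝ := sSup ((fun x => |f x|) '' Icc (0:ℝ) 1)

/-- The H^s(0,1) Sobolev norm. -/
def Hs (s : ℕ) (f : ℝ → ℝ) : ℝ :=
  Real.sqrt (∑ j ∈ Finset.range (s + 1), (L2 (iteratedDeriv j f)) ^ 2)

/-- The W^{s,∞}(0,1) norm. -/
def Winf (s : ℕ) (f : ℝ → ℝ) : ℝ := ∑ j ∈ Finset.range (s + 1), Linf (iteratedDeriv j f)

/-- A quasiuniform partition of [0,1] with maximal mesh length `h` and
quasiuniformity constant `c`. -/
structure Disc (c : ℝ) where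
  N : ℕ
  pt : Fin (N + 2) → ℝ
  h : ℝ
  h_pos : 0 < h
  mono : StrictMono pt
  left : pt 0 = 0
  right : pt (Fin.last (N + 1)) = 1
  len_le : ∀ i : Fin (N + 1), pt i.succ - pt i.castSucc ≤ h
  quasi : ∀ i : Fin (N + 1), c * h ≤ pt i.succ - pt i.castSucc

/-- The finite element space S_h of C^μ piecewise polynomials of degree ≤ r-1. -/
def Sp (r μ : ℕ) {c : ℝ} (D : Disc c) : Set (ℝ → ℝ) :=
  {φ | ContDiffOn ℝ μ φ (Icc 0 1) ∧
    ∀ i : Fin (D.N + 1), ∃ p : Polynomial ℝ, p.natDegree ≤ r - 1 ∧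
      ∀ t ∈ Icc (D.pt i.castSucc) (D.pt i.succ), φ t = p.eval t}

/-- The finite element space S_{h,0} with zero boundary conditions. -/
def Sp0 (r μ : ℕ) {c : ℝ} (D : Disc c) : Set (ℝ → ℝ) :=
  {φ | φ ∈ Sp r μ D ∧ φ 0 = 0 ∧ φ 1 = 0}

/-- `P` is the L²(0,1)-orthogonal projection onto `S`. -/
def IsL2Proj (S : Set (ℝ → ℝ)) (P : (ℝ → ℝ) → (ℝ → ℝ)) : Prop :=
  (∀ v, P v ∈ S) ∧ (∀ v χ, χ ∈ S → ip (fun x => v x - P v x) χ = 0) ∧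
  (∀ χ ∈ S, P χ = χ)

/-- The projection bounds (2.3a)-(2.3c). -/
def ProjBounds (P : (ℝ → ℝ) → (ℝ → ℝ)) (r : ℕ) (h Cp : ℝ) : Prop :=
  (∀ v, DifferentiableOn ℝ v (Icc 0 1) → Hs 1 (P v) ≤ Cp * Hs 1 v) ∧
  (∀ v, ContinuousOn v (Icc 0 1) → Linf (P v) ≤ Cp * Linf v) ∧
  (∀ v, ContDiffOn ℝ r v (Icc 0 1) → Linf (fun x => P v x - v x) ≤ Cp * h ^ r * Winf r v)

/-- The projection bounds (2.3a)-(2.3c) for functions vanishing at the endpoints. -/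
def ProjBounds0 (P0 : (ℝ → ℝ) → (ℝ → ℝ)) (r : ℕ) (h Cp : ℝ) : Prop :=
  (∀ v, DifferentiableOn ℝ v (Icc 0 1) → v 0 = 0 → v 1 = 0 → Hs 1 (P0 v) ≤ Cp * Hs 1 v) ∧
  (∀ v, ContinuousOn v (Icc 0 1) → v 0 = 0 → v 1 = 0 → Linf (P0 v) ≤ Cp * Linf v) ∧
  (∀ v, ContDiffOn ℝ r v (Icc 0 1) → v 0 = 0 → v 1 = 0 →
      Linf (fun x => P0 v x - v x) ≤ Cp * h ^ r * Winf r v)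

/-- The approximation property (2.1a). -/
def ApproxProp (S : Set (ℝ → ℝ)) (r : ℕ) (h Ca : ℝ) : Prop :=
  ∀ s : ℕ, 2 ≤ s → s ≤ r → ∀ w : ℝ → ℝ, ContDiffOn ℝ s w (Icc 0 1) →
    ∃ χ ∈ S, L2 (fun x => w x - χ x) + h * L2 (fun x => deriv w x - deriv χ x)
      ≤ Ca * h ^ s * L2 (iteratedDeriv s w)

/-- The approximation property (2.1a) for functions vanishing at the endpoints. -/
def ApproxProp0 (S : Set (ℝ → ℝ)) (r : ℕ) (h Ca : ℝ) : Prop :=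
  ∀ s : ℕ, 2 ≤ s → s ≤ r → ∀ w : ℝ → ℝ, ContDiffOn ℝ s w (Icc 0 1) → w 0 = 0 → w 1 = 0 →
    ∃ χ ∈ S, L2 (fun x => w x - χ x) + h * L2 (fun x => deriv w x - deriv χ x)
      ≤ Ca * h ^ s * L2 (iteratedDeriv s w)

/-- The inverse inequalities (2.2). -/
def InvIneq (S : Set (ℝ → ℝ)) (μ : ℕ) (h Ci : ℝ) : Prop :=
  ∀ χ ∈ S,
    (∀ a b : ℕ, b ≤ a → a ≤ μ + 1 → Hs a χ ≤ Ci / h ^ (a - b) * Hs b χ) ∧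
    (∀ j : ℕ, j ≤ μ → Winf j χ ≤ Ci / (h ^ j * Real.sqrt h) * L2 χ)

/-- `(η, u)` is a (sufficiently) smooth solution of the shallow water system on
`[0,1] × [0,T]`, with `1 + η ≥ α` there and homogeneous Dirichlet conditions on `u`. -/
def SWSolution (T α : ℝ) (η u : ℝ → ℝ → ℝ) : Prop :=
  ContDiff ℝ (⊤ : ℕ∞) (Function.uncurry η) ∧ ContDiff ℝ (⊤ : ℕ∞) (Function.uncurry u) ∧
  (∀ t ∈ Icc (0:ℝ) T, ∀ x ∈ Icc (0:ℝ) 1,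
      deriv (fun s => η s x) t + deriv (fun y => u t y + η t y * u t y) x = 0) ∧
  (∀ t ∈ Icc (0:ℝ) T, ∀ x ∈ Icc (0:ℝ) 1,
      deriv (fun s => u s x) t + deriv (fun y => η t y) x
        + u t x * deriv (fun y => u t y) x = 0) ∧
  (∀ t ∈ Icc (0:ℝ) T, u t 0 = 0 ∧ u t 1 = 0) ∧
  (∀ t ∈ Icc (0:ℝ) T, ∀ x ∈ Icc (0:ℝ) 1, α ≤ 1 + η t x)

/-- The RK4 coefficients a_j. -/
def aRK : ℕ → ℝ
  | 1 => 1/2 | 2 => 1/2 | 3 => 1 | _ => 0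

/-- The RK4 coefficients b_j. -/
def bRK : ℕ → ℝ
  | 1 => 1/6 | 2 => 1/3 | 3 => 1/3 | 4 => 1/6 | _ => 0

/-- Φ = W + V·W for a pair of stages (V, W). -/
def PhiOf (VW : (ℝ → ℝ) × (ℝ → ℝ)) : ℝ → ℝ := fun x => VW.2 x + VW.1 x * VW.2 x

/-- F = V_x + W·W_x for a pair of stages (V, W). -/
def FOf (VW : (ℝ → ℝ) × (ℝ → ℝ)) : ℝ → ℝ := fun x => deriv VW.1 x + VW.2 x * deriv VW.2 x

/-- The RK4 intermediate stages (V^{n,j}, W^{n,j}) starting from (Hn, Un). -/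
def RKstage (P P0 : (ℝ → ℝ) → (ℝ → ℝ)) (k : ℝ) (Hn Un : ℝ → ℝ) : ℕ → (ℝ → ℝ) × (ℝ → ℝ)
  | 0 => (Hn, Un)
  | j + 1 =>
      ((fun x => Hn x - k * aRK (j + 1) * P (deriv (PhiOf (RKstage P P0 k Hn Un j))) x),
       (fun x => Un x - k * aRK (j + 1) * P0 (FOf (RKstage P P0 k Hn Un j)) x))

/-- One full RK4 time step. -/
def RKstep (P P0 : (ℝ → ℝ) → (ℝ → ℝ)) (k : ℝ) (HU : (ℝ → ℝ) × (ℝ → ℝ)) :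
    (ℝ → ℝ) × (ℝ → ℝ) :=
  ((fun x => HU.1 x - k * P (deriv (fun y =>
      ∑ j ∈ Finset.range 4, bRK (j + 1) * PhiOf (RKstage P P0 k HU.1 HU.2 j) y)) x),
   (fun x => HU.2 x - k * P0 (fun y =>
      ∑ j ∈ Finset.range 4, bRK (j + 1) * FOf (RKstage P P0 k HU.1 HU.2 j) y) x))

/-- The fully discrete RK4 solution (H_h^n, U_h^n). -/
def RKsol (P P0 : (ℝ → ℝ) → (ℝ → ℝ)) (k : ℝ) (H0 U0 : ℝ → ℝ) : ℕ → (ℝ → ℝ) × (ℝ → ℝ)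
  | 0 => (H0, U0)
  | n + 1 => RKstep P P0 k (RKsol P P0 k H0 U0 n)

/-- The spatial truncation error ψ = H_t + P[(U + HU)_x]. -/
def psiD (P P0 : (ℝ → ℝ) → (ℝ → ℝ)) (η u : ℝ → ℝ → ℝ) (t x : ℝ) : ℝ :=
  deriv (fun s => P (η s) x) t
    + P (deriv (fun y => P0 (u t) y + P (η t) y * P0 (u t) y)) x

/-- The spatial truncation error ζ = U_t + P_0[H_x + U U_x]. -/
def zetaD (P P0 : (ℝ → ℝ) → (ℝ → ℝ)) (η u : ℝ → ℝ → ℝ) (t x : ℝ) : ℝ :=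
  deriv (fun s => P0 (u s) x) t
    + P0 (fun y => deriv (P (η t)) y + P0 (u t) y * deriv (P0 (u t)) y) x

/-- The pairs (ρ^{n,j}, r^{n,j}), j = 0, 1, 2, 3, of Lemma 4.2. -/
def rhoPair (P P0 : (ℝ → ℝ) → (ℝ → ℝ)) (Hn Un eps e : ℝ → ℝ) : ℕ → (ℝ → ℝ) × (ℝ → ℝ)
  | 0 => ((fun x => (1 + Hn x) * e x + Un x * eps x), (fun x => eps x + Un x * e x))
  | j + 1 =>
      ((fun x => (1 + Hn x) * P0 (deriv (rhoPair P P0 Hn Un eps e j).2) x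
          + Un x * P (deriv (rhoPair P P0 Hn Un eps e j).1) x),
       (fun x => P (deriv (rhoPair P P0 Hn Un eps e j).1) x
          + Un x * P0 (deriv (rhoPair P P0 Hn Un eps e j).2) x))

/-- The pairs (ρ^{n,i}, r^{n,i}) for i = -1, 0, 1, 2, 3, where
ρ^{n,-1}(x) = ∫₀ˣ ε and r^{n,-1}(x) = ∫₀ˣ e. -/
def rhoPairZ (P P0 : (ℝ → ℝ) → (ℝ → ℝ)) (Hn Un eps e : ℝ → ℝ) (i : ℤ) :
    (ℝ → ℝ) × (ℝ → ℝ) :=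
  if i < 0 then ((fun x => ∫ t in (0:ℝ)..x, eps t), (fun x => ∫ t in (0:ℝ)..x, e t))
  else rhoPair P P0 Hn Un eps e i.toNat

/-- The quantity γ_i^{n,l} of Lemma 4.3 (with integer indices). -/
def gammaZ (P P0 : (ℝ → ℝ) → (ℝ → ℝ)) (Hn Un eps e : ℝ → ℝ) (i l : ℤ) : ℝ :=
  ip (fun x => deriv Un x * P (deriv (rhoPairZ P P0 Hn Un eps e i).1) x)
     (P (deriv (rhoPairZ P P0 Hn Un eps e l).1)) +
  ip (fun x => ((1 + Hn x) * deriv Un x - deriv Hn x * Un x)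
        * P0 (deriv (rhoPairZ P P0 Hn Un eps e i).2) x)
     (P0 (deriv (rhoPairZ P P0 Hn Un eps e l).2))

/-- The quantity γ_i^{n,l} of Lemma 4.3 (with natural number indices). -/
def gammaN (P P0 : (ℝ → ℝ) → (ℝ → ℝ)) (Hn Un eps e : ℝ → ℝ) (i l : ℕ) : ℝ :=
  ip (fun x => deriv Un x * P (deriv (rhoPair P P0 Hn Un eps e i).1) x)
     (P (deriv (rhoPair P P0 Hn Un eps e l).1)) +
  ip (fun x => ((1 + Hn x) * deriv Un x - deriv Hn x * Un x)
        * P0 (deriv (rhoPair P P0 Hn Un eps e i).2) x)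
     (P0 (deriv (rhoPair P P0 Hn Un eps e l).2))


abbrev nu01 : Measure ℝ := volume.restrict (Ioc 0 1)

lemma ip_eq_nu (f g : ℝ → ℝ) : ip f g = ∫ x, f x * g x ∂nu01 :=
  intervalIntegral.integral_of_le zero_le_one

instance : IsProbabilityMeasure nu01 := by
  constructor
  simp [Measure.restrict_apply_univ, Real.volume_Ioc]

def Adm (f : ℝ → ℝ) : Prop :=
  AEStronglyMeasurable f nu01 ∧ ∃ M, 0 ≤ M ∧ ∀ᵐ x ∂nu01, |f x| ≤ M

lemma Adm.integrable {f : ℝ → ℝ} (hf : Adm f) : Integrable f nu01 := by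
  obtain ⟨hm, M, hM0, hM⟩ := hf
  exact Integrable.mono' (integrable_const M) hm (by simpa using hM)

lemma Adm.mul {f g : ℝ → ℝ} (hf : Adm f) (hg : Adm g) : Adm (fun x => f x * g x) := by
  obtain ⟨hmf, Mf, hMf0, hMf⟩ := hf
  obtain ⟨hmg, Mg, hMg0, hMg⟩ := hg
  refine ⟨hmf.mul hmg, Mf * Mg, mul_nonneg hMf0 hMg0, ?_⟩
  filter_upwards [hMf, hMg] with x h1 h2
  rw [abs_mul]
  exact mul_le_mul h1 h2 (abs_nonneg _) hMf0

lemma Adm.add {f g : ℝ → ℝ} (hf : Adm f) (hg : Adm g) : Adm (fun x => f x + g x) := by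
  obtain ⟨hmf, Mf, hMf0, hMf⟩ := hf
  obtain ⟨hmg, Mg, hMg0, hMg⟩ := hg
  refine ⟨hmf.add hmg, Mf + Mg, by linarith, ?_⟩
  filter_upwards [hMf, hMg] with x h1 h2
  exact (abs_add_le _ _).trans (by linarith)

lemma Adm.congr {f g : ℝ → ℝ} (hg : Adm g) (h : f =ᵐ[nu01] g) : Adm f := by
  obtain ⟨hmg, Mg, hMg0, hMg⟩ := hg
  refine ⟨hmg.congr h.symm, Mg, hMg0, ?_⟩
  filter_upwards [hMg, h] with x h1 h2
  rw [h2]; exact h1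

lemma adm_of_continuousOn {f : ℝ → ℝ} (hf : ContinuousOn f (Icc 0 1)) : Adm f := by
  obtain ⟨M, hM⟩ := isCompact_Icc.exists_bound_of_continuousOn hf
  refine ⟨(hf.mono Ioc_subset_Icc_self).aestronglyMeasurable measurableSet_Ioc,
    max M 0, le_max_right _ _, ?_⟩
  filter_upwards [ae_restrict_mem measurableSet_Ioc] with x hx
  exact le_max_of_le_left (hM x (Ioc_subset_Icc_self hx))

lemma ae_mem_Icc : ∀ᵐ x ∂nu01, x ∈ Icc (0:ℝ) 1 := by
  filter_upwards [ae_restrict_mem measurableSet_Ioc] with x hx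
  exact Ioc_subset_Icc_self hx

lemma ae_mem_Ioo : ∀ᵐ x ∂nu01, x ∈ Ioo (0:ℝ) 1 := by
  have h : nu01 = volume.restrict (Ioo 0 1) :=
    (Measure.restrict_congr_set Ioo_ae_eq_Ioc).symm
  rw [h]
  exact ae_restrict_mem measurableSet_Ioo

lemma integral_cmul (r : ℝ) (f : ℝ → ℝ) :
    ∫ x, r * f x ∂nu01 = r * ∫ x, f x ∂nu01 := by
  simpa [smul_eq_mul] using integral_smul (μ := nu01) r f

lemma integral_add3 {A B C : ℝ → ℝ} (hA : Integrable A nu01) (hB : Integrable B nu01)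
    (hC : Integrable C nu01) :
    ∫ x, (A x + B x + C x) ∂nu01 = (∫ x, A x ∂nu01) + (∫ x, B x ∂nu01) + (∫ x, C x ∂nu01) := by
  have h := integral_add (hA.add hB) hC
  simp only [Pi.add_apply] at h
  rw [h, integral_add hA hB]

lemma ip_self_nonneg (f : ℝ → ℝ) : 0 ≤ ip f f := by
  rw [ip_eq_nu]
  exact integral_nonneg fun x => mul_self_nonneg _

lemma L2_nonneg (f : ℝ → ℝ) : 0 ≤ L2 f := Real.sqrt_nonneg _

lemma L2_sq (f : ℝ → ℝ) : L2 f ^ 2 = ip f f := Real.sq_sqrt (ip_self_nonneg f)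

lemma L2_congr {f g : ℝ → ℝ} (h : f =ᵐ[nu01] g) : L2 f = L2 g := by
  unfold L2
  rw [ip_eq_nu, ip_eq_nu]
  congr 1
  exact integral_congr_ae (by filter_upwards [h] with x hx; rw [hx])

lemma ip_sq_le {f g : ℝ → ℝ} (hf : Adm f) (hg : Adm g) :
    ip f g ^ 2 ≤ ip f f * ip g g := by
  have key : ∀ t : ℝ, 0 ≤ ip f f * (t * t) + (2 * ip f g) * t + ip g g := by
    intro t
    have i1 : Integrable (fun x => (t * t) * (f x * f x)) nu01 :=
      ((hf.mul hf).integrable).const_mul _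
    have i2 : Integrable (fun x => (2 * t) * (f x * g x)) nu01 :=
      ((hf.mul hg).integrable).const_mul _
    have i3 : Integrable (fun x => g x * g x) nu01 := (hg.mul hg).integrable
    have h1 : (0:ℝ) ≤ ∫ x, ((t * t) * (f x * f x) + (2 * t) * (f x * g x) + g x * g x) ∂nu01 := by
      refine integral_nonneg fun x => ?_
      show (0:ℝ) ≤ _
      nlinarith [sq_nonneg (t * f x + g x)]
    rw [integral_add3 i1 i2 i3, integral_cmul, integral_cmul] at h1
    rw [ip_eq_nu, ip_eq_nu, ip_eq_nu]
    nlinarith [h1]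
  have hd := discrim_le_zero key
  unfold discrim at hd
  nlinarith [hd]

lemma abs_ip_le {f g : ℝ → ℝ} (hf : Adm f) (hg : Adm g) :
    |ip f g| ≤ L2 f * L2 g := by
  have h := ip_sq_le hf hg
  calc |ip f g| = Real.sqrt (ip f g ^ 2) := (Real.sqrt_sq_eq_abs _).symm
    _ ≤ Real.sqrt (ip f f * ip g g) := Real.sqrt_le_sqrt h
    _ = L2 f * L2 g := Real.sqrt_mul (ip_self_nonneg f) _

lemma L2_add_le {f g : ℝ → ℝ} (hf : Adm f) (hg : Adm g) :
    L2 (fun x => f x + g x) ≤ L2 f + L2 g := by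
  have hip : ip (fun x => f x + g x) (fun x => f x + g x)
      = ip f f + 2 * ip f g + ip g g := by
    rw [ip_eq_nu, ip_eq_nu, ip_eq_nu, ip_eq_nu]
    have i1 : Integrable (fun x => f x * f x) nu01 := (hf.mul hf).integrable
    have i2 : Integrable (fun x => (2:ℝ) * (f x * g x)) nu01 :=
      ((hf.mul hg).integrable).const_mul _
    have i3 : Integrable (fun x => g x * g x) nu01 := (hg.mul hg).integrable
    have : (fun x => (f x + g x) * (f x + g x))
        = fun x => f x * f x + (2:ℝ) * (f x * g x) + g x * g x := by
      funext x; ring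
    rw [this, integral_add3 i1 i2 i3, integral_cmul]
  have h1 : L2 (fun x => f x + g x) ^ 2 ≤ (L2 f + L2 g) ^ 2 := by
    rw [L2_sq, hip]
    have h2 : ip f g ≤ L2 f * L2 g := (le_abs_self _).trans (abs_ip_le hf hg)
    have e1 := L2_sq f
    have e2 := L2_sq g
    nlinarith [L2_nonneg f, L2_nonneg g]
  calc L2 (fun x => f x + g x) = Real.sqrt (L2 (fun x => f x + g x) ^ 2) :=
        (Real.sqrt_sq (L2_nonneg _)).symm
    _ ≤ Real.sqrt ((L2 f + L2 g) ^ 2) := Real.sqrt_le_sqrt h1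
    _ = L2 f + L2 g := Real.sqrt_sq (add_nonneg (L2_nonneg f) (L2_nonneg g))

lemma L2_mul_le {f g : ℝ → ℝ} {M : ℝ} (hf : Adm f) (hg : Adm g)
    (hM : ∀ᵐ x ∂nu01, |f x| ≤ M) (hM0 : 0 ≤ M) :
    L2 (fun x => f x * g x) ≤ M * L2 g := by
  unfold L2
  rw [ip_eq_nu, ip_eq_nu]
  have hmono : ∫ x, (f x * g x) * (f x * g x) ∂nu01
      ≤ ∫ x, (M * M) * (g x * g x) ∂nu01 := by
    refine integral_mono_ae ((hf.mul hg).mul (hf.mul hg)).integrable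
      (((hg.mul hg)).integrable.const_mul _) ?_
    filter_upwards [hM] with x hx
    have h1 : f x * f x ≤ M * M := by nlinarith [abs_nonneg (f x), le_abs_self (f x), neg_abs_le (f x)]
    nlinarith [mul_self_nonneg (g x), mul_self_nonneg (f x)]
  calc Real.sqrt (∫ x, (f x * g x) * (f x * g x) ∂nu01)
      ≤ Real.sqrt (∫ x, (M * M) * (g x * g x) ∂nu01) := Real.sqrt_le_sqrt hmono
    _ = Real.sqrt ((M * M) * ∫ x, g x * g x ∂nu01) := by rw [integral_cmul]
    _ = M * Real.sqrt (∫ x, g x * g x ∂nu01) := by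
        rw [Real.sqrt_mul (mul_nonneg hM0 hM0), Real.sqrt_mul_self hM0]

lemma L2_le_of_bound {f : ℝ → ℝ} {M : ℝ} (hf : Adm f)
    (hM : ∀ᵐ x ∂nu01, |f x| ≤ M) (hM0 : 0 ≤ M) : L2 f ≤ M := by
  unfold L2
  rw [ip_eq_nu]
  have hmono : ∫ x, f x * f x ∂nu01 ≤ ∫ x, (M * M) ∂nu01 := by
    refine integral_mono_ae (hf.mul hf).integrable (integrable_const _) ?_
    filter_upwards [hM] with x hx
    nlinarith [abs_nonneg (f x), le_abs_self (f x), neg_abs_le (f x)]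
  rw [integral_const] at hmono
  simp only [probReal_univ, smul_eq_mul, one_mul] at hmono
  calc Real.sqrt (∫ x, f x * f x ∂nu01) ≤ Real.sqrt (M * M) := Real.sqrt_le_sqrt hmono
    _ = M := Real.sqrt_mul_self hM0

lemma linf_nonneg (f : ℝ → ℝ) : 0 ≤ Linf f :=
  Real.sSup_nonneg fun x hx => by obtain ⟨y, _, rfl⟩ := hx; exact abs_nonneg _

lemma le_linf {f : ℝ → ℝ} (hf : ContinuousOn f (Icc 0 1)) {x : ℝ}
    (hx : x ∈ Icc (0:ℝ) 1) : |f x| ≤ Linf f := by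
  refine le_csSup ?_ ⟨x, hx, rfl⟩
  exact (isCompact_Icc.image_of_continuousOn (continuous_abs.comp_continuousOn hf)).bddAbove

lemma linf_le {f : ℝ → ℝ} {M : ℝ} (hM0 : 0 ≤ M) (h : ∀ x ∈ Icc (0:ℝ) 1, |f x| ≤ M) :
    Linf f ≤ M := by
  refine Real.sSup_le ?_ hM0
  rintro y ⟨x, hx, rfl⟩
  exact h x hx

lemma Hs_zero_eq (f : ℝ → ℝ) : Hs 0 f = L2 f := by
  simp only [Hs, Finset.sum_range_succ, Finset.sum_range_zero, iteratedDeriv_zero, zero_add]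
  exact Real.sqrt_sq (L2_nonneg f)

lemma L2_deriv_le_Hs_one (f : ℝ → ℝ) : L2 (deriv f) ≤ Hs 1 f := by
  simp only [Hs, Finset.sum_range_succ, Finset.sum_range_zero, iteratedDeriv_zero,
    iteratedDeriv_one, zero_add]
  calc L2 (deriv f) = Real.sqrt (L2 (deriv f) ^ 2) := (Real.sqrt_sq (L2_nonneg _)).symm
    _ ≤ Real.sqrt (L2 f ^ 2 + L2 (deriv f) ^ 2) :=
        Real.sqrt_le_sqrt (le_add_of_nonneg_left (sq_nonneg _))

lemma Hs_one_le {f : ℝ → ℝ} {a b : ℝ} (h1 : L2 f ≤ a) (h2 : L2 (deriv f) ≤ b) :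
    Hs 1 f ≤ a + b := by
  have ha : 0 ≤ a := (L2_nonneg f).trans h1
  have hb : 0 ≤ b := (L2_nonneg _).trans h2
  simp only [Hs, Finset.sum_range_succ, Finset.sum_range_zero, iteratedDeriv_zero,
    iteratedDeriv_one, zero_add]
  calc Real.sqrt (L2 f ^ 2 + L2 (deriv f) ^ 2) ≤ Real.sqrt ((a + b) ^ 2) := by
        refine Real.sqrt_le_sqrt ?_
        nlinarith [L2_nonneg f, L2_nonneg (deriv f)]
    _ = a + b := Real.sqrt_sq (by linarith)

lemma winf_zero_eq (f : ℝ → ℝ) : Winf 0 f = Linf f := by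
  simp [Winf, Finset.range_one, iteratedDeriv_zero]

lemma Hs_nonneg (s : ℕ) (f : ℝ → ℝ) : 0 ≤ Hs s f := Real.sqrt_nonneg _

-- spline regularity facts
lemma spline_diffAt {χ : ℝ → ℝ} (hχ : ContDiffOn ℝ 1 χ (Icc 0 1)) {x : ℝ}
    (hx : x ∈ Ioo (0:ℝ) 1) : DifferentiableAt ℝ χ x := by
  have hn : Icc (0:ℝ) 1 ∈ nhds x := Icc_mem_nhds hx.1 hx.2
  exact (hχ.contDiffAt hn).differentiableAt one_ne_zero

lemma spline_deriv_ae {χ : ℝ → ℝ} (hχ : ContDiffOn ℝ 1 χ (Icc 0 1)) :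
    deriv χ =ᵐ[nu01] derivWithin χ (Icc 0 1) := by
  filter_upwards [ae_mem_Ioo] with x hx
  exact (derivWithin_of_mem_nhds (Icc_mem_nhds hx.1 hx.2)).symm

lemma spline_deriv_adm {χ : ℝ → ℝ} (hχ : ContDiffOn ℝ 1 χ (Icc 0 1)) :
    Adm (deriv χ) := by
  have hg : ContinuousOn (derivWithin χ (Icc 0 1)) (Icc 0 1) :=
    hχ.continuousOn_derivWithin (uniqueDiffOn_Icc zero_lt_one) le_rfl
  exact (adm_of_continuousOn hg).congr (spline_deriv_ae hχ)

lemma proj_L2_le {S : Set (ℝ → ℝ)} {Pr : (ℝ → ℝ) → (ℝ → ℝ)} (hP : IsL2Proj S Pr)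
    {v : ℝ → ℝ} (hv : Adm v) (hPv : Adm (Pr v)) : L2 (Pr v) ≤ L2 v := by
  have h0 := hP.2.1 v (Pr v) (hP.1 v)
  have hsub : ip (fun x => v x - Pr v x) (Pr v) = ip v (Pr v) - ip (Pr v) (Pr v) := by
    rw [ip_eq_nu, ip_eq_nu, ip_eq_nu,
      ← integral_sub (hv.mul hPv).integrable (hPv.mul hPv).integrable]
    congr 1
    funext x
    ring
  have h1 : ip (Pr v) (Pr v) = ip v (Pr v) := by
    rw [h0] at hsub
    linarith
  have h2 : L2 (Pr v) ^ 2 ≤ L2 v * L2 (Pr v) := by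
    rw [L2_sq, h1]
    exact (le_abs_self _).trans (abs_ip_le hv hPv)
  rcases eq_or_lt_of_le (L2_nonneg (Pr v)) with h | h
  · rw [← h]; exact L2_nonneg v
  · nlinarith [h2]

lemma slice_hasDerivAt {F : ℝ × ℝ → ℝ} (hF : Differentiable ℝ F) (t x : ℝ) :
    HasDerivAt (fun y => F (t, y)) (fderiv ℝ F (t, x) ((0:ℝ), (1:ℝ))) x := by
  have h1 : HasDerivAt (fun y : ℝ => ((t, y) : ℝ × ℝ)) (((0:ℝ), (1:ℝ))) x :=
    (hasDerivAt_const x t).prodMk (hasDerivAt_id x)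
  exact (hF (t, x)).hasFDerivAt.comp_hasDerivAt x h1


set_option maxHeartbeats 4000000 in
/-- Lemma 4.2, inequality (4.8):
`‖(ρ^{n,j})ₓ‖ + ‖(r^{n,j})ₓ‖ ≤ (C/h^{j+1}) (‖εⁿ‖ + ‖eⁿ‖)`, j = 1, 2, 3. -/
theorem stmt11 (r μ : ℕ) (hr : 3 ≤ r) (hμ1 : 1 ≤ μ) (hμ2 : μ ≤ r - 2)
    (c Ci Cp T α : ℝ) (hc : 0 < c) (hT : 0 < T) (hα : 0 < α)
    (η u : ℝ → ℝ → ℝ) (hsol : SWSolution T α η u) :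
    ∃ C : ℝ, ∀ (D : Disc c) (P P0 : (ℝ → ℝ) → (ℝ → ℝ)) (k : ℝ) (M : ℕ),
      IsL2Proj (Sp r μ D) P → IsL2Proj (Sp0 r μ D) P0 →
      InvIneq (Sp r μ D) μ D.h Ci → InvIneq (Sp0 r μ D) μ D.h Ci →
      ProjBounds P r D.h Cp → ProjBounds0 P0 r D.h Cp →
      0 < k → k * M = T →
      ∀ n : ℕ, n ≤ M → ∀ eps ∈ Sp r μ D, ∀ e ∈ Sp0 r μ D,
        ∀ j : ℕ, 1 ≤ j → j ≤ 3 →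
        L2 (deriv (rhoPair P P0 (P (η ((n : ℝ) * k))) (P0 (u ((n : ℝ) * k))) eps e j).1)
          + L2 (deriv (rhoPair P P0 (P (η ((n : ℝ) * k))) (P0 (u ((n : ℝ) * k))) eps e j).2)
          ≤ C / D.h ^ (j + 1) * (L2 eps + L2 e) := by
  classical
  obtain ⟨hηs, hus, -, -, hubc, -⟩ := hsol
  set F := Function.uncurry η with hF
  set G := Function.uncurry u with hG
  have hFd : Differentiable ℝ F := hηs.differentiable (by simp)
  have hGd : Differentiable ℝ G := hus.differentiable (by simp)
  -- sup bounds on the solution and its x-derivatives over [0,T]×[0,1]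
  have hcpt : IsCompact (Icc (0:ℝ) T ×ˢ Icc (0:ℝ) 1) := isCompact_Icc.prod isCompact_Icc
  obtain ⟨K1, hK1⟩ := hcpt.exists_bound_of_continuousOn hηs.continuous.continuousOn
  obtain ⟨K2, hK2⟩ := hcpt.exists_bound_of_continuousOn
    (((hηs.continuous_fderiv (by simp)).clm_apply continuous_const).continuousOn :
      ContinuousOn (fun p : ℝ × ℝ => fderiv ℝ F p ((0:ℝ), (1:ℝ))) _)
  obtain ⟨K3, hK3⟩ := hcpt.exists_bound_of_continuousOn hus.continuous.continuousOn
  obtain ⟨K4, hK4⟩ := hcpt.exists_bound_of_continuousOn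
    (((hus.continuous_fderiv (by simp)).clm_apply continuous_const).continuousOn :
      ContinuousOn (fun p : ℝ × ℝ => fderiv ℝ G p ((0:ℝ), (1:ℝ))) _)
  set K := |K1| + |K2| + |K3| + |K4| with hK
  have hK0 : 0 ≤ K := by positivity
  have hK1K : K1 ≤ K := by
    have := abs_nonneg K2; have := abs_nonneg K3; have := abs_nonneg K4
    have := le_abs_self K1; simp only [hK]; linarith
  have hK2K : K2 ≤ K := by
    have := abs_nonneg K1; have := abs_nonneg K3; have := abs_nonneg K4
    have := le_abs_self K2; simp only [hK]; linarith
  have hK3K : K3 ≤ K := by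
    have := abs_nonneg K1; have := abs_nonneg K2; have := abs_nonneg K4
    have := le_abs_self K3; simp only [hK]; linarith
  have hK4K : K4 ≤ K := by
    have := abs_nonneg K1; have := abs_nonneg K2; have := abs_nonneg K3
    have := le_abs_self K4; simp only [hK]; linarith
  -- constants
  set CI := max Ci 1 with hCI
  set CP := max Cp 1 with hCP
  have hCI1 : 1 ≤ CI := le_max_right _ _
  have hCP1 : 1 ≤ CP := le_max_right _ _
  have hCI0 : 0 ≤ CI := by linarith
  have hCP0 : 0 ≤ CP := by linarith
  have hCiCI : Ci ≤ CI := le_max_left _ _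
  have hCpCP : Cp ≤ CP := le_max_left _ _
  set σ := (Real.sqrt c)⁻¹ with hσ
  have hσ0 : 0 ≤ σ := by positivity
  set KK := CP * (K + K) with hKK
  have hKK0 : 0 ≤ KK := by positivity
  set MB := CP * K with hMB
  have hMB0 : 0 ≤ MB := by positivity
  set CQ := CI * KK * σ + (1 + MB) * CI + CI * MB + CI with hCQ
  have hCQpieces : 0 ≤ CI * KK * σ ∧ 0 ≤ (1 + MB) * CI ∧ 0 ≤ CI * MB := by
    refine ⟨by positivity, ?_, by positivity⟩
    have : (0:ℝ) ≤ 1 + MB := by linarith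
    positivity
  have hCQ1 : 1 ≤ CQ := by
    obtain ⟨p1, p2, p3⟩ := hCQpieces
    simp only [hCQ]; linarith
  set C2 := 4 * CQ with hC2
  have hC2one : 1 ≤ C2 := by simp only [hC2]; linarith
  have hC20 : 0 ≤ C2 := by linarith
  clear_value K CI CP σ KK MB CQ C2
  refine ⟨C2 ^ 4, ?_⟩
  intro D P P0 k M hP hP0 hInv hInv0 hPB hPB0 hk hkM n hn eps heps e he j hj1 hj3
  have hh0 : 0 < D.h := D.h_pos
  set s := Real.sqrt D.h with hsdef
  have hs0 : 0 < s := Real.sqrt_pos.mpr hh0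
  have hss : s * s = D.h := Real.mul_self_sqrt hh0.le
  -- quasiuniformity gives h ≤ 1/c
  have hch : c * D.h ≤ 1 := by
    have h1 := D.quasi 0
    have h2 : D.pt (Fin.succ 0) ≤ D.pt (Fin.last (D.N + 1)) :=
      D.mono.monotone (Fin.le_last _)
    have h3 : D.pt 0 ≤ D.pt (Fin.castSucc 0) := D.mono.monotone (Fin.zero_le _)
    rw [D.right] at h2
    rw [D.left] at h3
    linarith
  have hsσ : s ≤ σ := by
    have hhc : D.h ≤ c⁻¹ := by
      rw [← one_div, le_div_iff₀ hc]
      linarith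
    calc s ≤ Real.sqrt c⁻¹ := Real.sqrt_le_sqrt hhc
      _ = σ := by rw [hσ, Real.sqrt_inv]
  clear_value s
  -- the time point
  set t := (n : ℝ) * k with ht
  have htT : t ∈ Icc (0:ℝ) T := by
    constructor
    · exact mul_nonneg (Nat.cast_nonneg n) hk.le
    · have h1 : (n : ℝ) ≤ M := Nat.cast_le.mpr hn
      have h2 : (n : ℝ) * k ≤ (M : ℝ) * k := mul_le_mul_of_nonneg_right h1 hk.le
      rw [ht]
      linarith [hkM, mul_comm (M : ℝ) k]
  clear_value t
  -- regularity of the time slices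
  have hηcont : ContinuousOn (η t) (Icc 0 1) :=
    (hηs.continuous.comp (continuous_const.prodMk continuous_id)).continuousOn
  have hucont : ContinuousOn (u t) (Icc 0 1) :=
    (hus.continuous.comp (continuous_const.prodMk continuous_id)).continuousOn
  have hηdiff : DifferentiableOn ℝ (η t) (Icc 0 1) :=
    (hFd.comp ((differentiable_const t).prodMk differentiable_id)).differentiableOn
  have hudiff : DifferentiableOn ℝ (u t) (Icc 0 1) :=
    (hGd.comp ((differentiable_const t).prodMk differentiable_id)).differentiableOn
  have hderivη : deriv (η t) = fun x => fderiv ℝ F (t, x) ((0:ℝ), (1:ℝ)) := by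
    funext x
    exact HasDerivAt.deriv (slice_hasDerivAt hFd t x)
  have hderivu : deriv (u t) = fun x => fderiv ℝ G (t, x) ((0:ℝ), (1:ℝ)) := by
    funext x
    exact HasDerivAt.deriv (slice_hasDerivAt hGd t x)
  -- L², L^∞, H¹ bounds on the slices
  have hbη : ∀ x ∈ Icc (0:ℝ) 1, |η t x| ≤ K := by
    intro x hx
    have h1 := hK1 (t, x) (mk_mem_prod htT hx)
    rw [Real.norm_eq_abs] at h1
    exact h1.trans hK1K
  have hbu : ∀ x ∈ Icc (0:ℝ) 1, |u t x| ≤ K := by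
    intro x hx
    have h1 := hK3 (t, x) (mk_mem_prod htT hx)
    rw [Real.norm_eq_abs] at h1
    exact h1.trans hK3K
  have hbdη : ∀ x ∈ Icc (0:ℝ) 1, |deriv (η t) x| ≤ K := by
    intro x hx
    rw [hderivη]
    have h1 := hK2 (t, x) (mk_mem_prod htT hx)
    rw [Real.norm_eq_abs] at h1
    exact h1.trans hK2K
  have hbdu : ∀ x ∈ Icc (0:ℝ) 1, |deriv (u t) x| ≤ K := by
    intro x hx
    rw [hderivu]
    have h1 := hK4 (t, x) (mk_mem_prod htT hx)
    rw [Real.norm_eq_abs] at h1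
    exact h1.trans hK4K
  have hLinfη : Linf (η t) ≤ K := linf_le hK0 hbη
  have hLinfu : Linf (u t) ≤ K := linf_le hK0 hbu
  have hL2η : L2 (η t) ≤ K := by
    refine L2_le_of_bound (adm_of_continuousOn hηcont) ?_ hK0
    filter_upwards [ae_mem_Icc] with x hx using hbη x hx
  have hL2u : L2 (u t) ≤ K := by
    refine L2_le_of_bound (adm_of_continuousOn hucont) ?_ hK0
    filter_upwards [ae_mem_Icc] with x hx using hbu x hx
  have hadmdη : Adm (deriv (η t)) := by
    rw [hderivη]
    exact adm_of_continuousOn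
      (((hηs.continuous_fderiv (by simp)).clm_apply continuous_const).comp
        (continuous_const.prodMk continuous_id)).continuousOn
  have hadmdu : Adm (deriv (u t)) := by
    rw [hderivu]
    exact adm_of_continuousOn
      (((hus.continuous_fderiv (by simp)).clm_apply continuous_const).comp
        (continuous_const.prodMk continuous_id)).continuousOn
  have hL2dη : L2 (deriv (η t)) ≤ K := by
    refine L2_le_of_bound hadmdη ?_ hK0
    filter_upwards [ae_mem_Icc] with x hx using hbdη x hx
  have hL2du : L2 (deriv (u t)) ≤ K := by
    refine L2_le_of_bound hadmdu ?_ hK0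
    filter_upwards [ae_mem_Icc] with x hx using hbdu x hx
  have hHs1η : Hs 1 (η t) ≤ K + K := Hs_one_le hL2η hL2dη
  have hHs1u : Hs 1 (u t) ≤ K + K := Hs_one_le hL2u hL2du
  obtain ⟨hu0, hu1⟩ := hubc t htT
  -- the projections of the slices
  set Hn := P (η t) with hHndef
  set Un := P0 (u t) with hUndef
  have hHnSp : Hn ∈ Sp r μ D := hP.1 _
  have hUnSp0 : Un ∈ Sp0 r μ D := hP0.1 _
  have spC1 : ∀ {χ : ℝ → ℝ}, χ ∈ Sp r μ D → ContDiffOn ℝ 1 χ (Icc 0 1) := by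
    intro χ hχ
    refine hχ.1.of_le ?_
    exact_mod_cast hμ1
  have hHnC1 : ContDiffOn ℝ 1 Hn (Icc 0 1) := spC1 hHnSp
  have hUnC1 : ContDiffOn ℝ 1 Un (Icc 0 1) := spC1 hUnSp0.1
  have hHncont : ContinuousOn Hn (Icc 0 1) := hHnC1.continuousOn
  have hUncont : ContinuousOn Un (Icc 0 1) := hUnC1.continuousOn
  have admHn : Adm Hn := adm_of_continuousOn hHncont
  have admUn : Adm Un := adm_of_continuousOn hUncont
  have admdHn : Adm (deriv Hn) := spline_deriv_adm hHnC1
  have admdUn : Adm (deriv Un) := spline_deriv_adm hUnC1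
  -- L^∞ bounds on Hn, Un
  have hHnb : ∀ x ∈ Icc (0:ℝ) 1, |Hn x| ≤ MB := by
    intro x hx
    have h1 : Linf Hn ≤ Cp * Linf (η t) := hPB.2.1 (η t) hηcont
    have h2 : Cp * Linf (η t) ≤ CP * Linf (η t) :=
      mul_le_mul_of_nonneg_right hCpCP (linf_nonneg _)
    have h3 : CP * Linf (η t) ≤ CP * K := mul_le_mul_of_nonneg_left hLinfη hCP0
    have h4 := le_linf hHncont hx
    simp only [hMB]
    linarith
  have hUnb : ∀ x ∈ Icc (0:ℝ) 1, |Un x| ≤ MB := by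
    intro x hx
    have h1 : Linf Un ≤ Cp * Linf (u t) := hPB0.2.1 (u t) hucont hu0 hu1
    have h2 : Cp * Linf (u t) ≤ CP * Linf (u t) :=
      mul_le_mul_of_nonneg_right hCpCP (linf_nonneg _)
    have h3 : CP * Linf (u t) ≤ CP * K := mul_le_mul_of_nonneg_left hLinfu hCP0
    have h4 := le_linf hUncont hx
    simp only [hMB]
    linarith
  -- L² bounds on the derivatives of Hn, Un
  have hdHnL2 : L2 (deriv Hn) ≤ KK := by
    have h1 : Hs 1 Hn ≤ Cp * Hs 1 (η t) := hPB.1 (η t) hηdiff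
    have h2 : Cp * Hs 1 (η t) ≤ CP * Hs 1 (η t) :=
      mul_le_mul_of_nonneg_right hCpCP (Hs_nonneg _ _)
    have h3 : CP * Hs 1 (η t) ≤ CP * (K + K) := mul_le_mul_of_nonneg_left hHs1η hCP0
    have h4 := L2_deriv_le_Hs_one Hn
    simp only [hKK]
    linarith
  have hdUnL2 : L2 (deriv Un) ≤ KK := by
    have h1 : Hs 1 Un ≤ Cp * Hs 1 (u t) := hPB0.1 (u t) hudiff hu0 hu1
    have h2 : Cp * Hs 1 (u t) ≤ CP * Hs 1 (u t) :=
      mul_le_mul_of_nonneg_right hCpCP (Hs_nonneg _ _)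
    have h3 : CP * Hs 1 (u t) ≤ CP * (K + K) := mul_le_mul_of_nonneg_left hHs1u hCP0
    have h4 := L2_deriv_le_Hs_one Un
    simp only [hKK]
    linarith
  clear_value Hn Un
  -- inverse inequalities, in usable form
  have invL2 : ∀ {χ : ℝ → ℝ}, χ ∈ Sp r μ D → L2 (deriv χ) ≤ CI / D.h * L2 χ := by
    intro χ hχ
    have h1 := (hInv χ hχ).1 1 0 (Nat.zero_le 1) (by omega)
    rw [Nat.sub_zero, pow_one, Hs_zero_eq] at h1
    have h2 : Ci / D.h * L2 χ ≤ CI / D.h * L2 χ := by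
      refine mul_le_mul_of_nonneg_right ?_ (L2_nonneg χ)
      exact (div_le_div_iff_of_pos_right hh0).mpr hCiCI
    exact (L2_deriv_le_Hs_one χ).trans (h1.trans h2)
  have invL20 : ∀ {χ : ℝ → ℝ}, χ ∈ Sp0 r μ D → L2 (deriv χ) ≤ CI / D.h * L2 χ := by
    intro χ hχ
    have h1 := (hInv0 χ hχ).1 1 0 (Nat.zero_le 1) (by omega)
    rw [Nat.sub_zero, pow_one, Hs_zero_eq] at h1
    have h2 : Ci / D.h * L2 χ ≤ CI / D.h * L2 χ := by
      refine mul_le_mul_of_nonneg_right ?_ (L2_nonneg χ)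
      exact (div_le_div_iff_of_pos_right hh0).mpr hCiCI
    exact (L2_deriv_le_Hs_one χ).trans (h1.trans h2)
  have invLinf : ∀ {χ : ℝ → ℝ}, χ ∈ Sp r μ D → Linf χ ≤ CI / s * L2 χ := by
    intro χ hχ
    have h1 := (hInv χ hχ).2 0 (Nat.zero_le μ)
    rw [pow_zero, one_mul, winf_zero_eq] at h1
    rw [← hsdef] at h1
    have h2 : Ci / s * L2 χ ≤ CI / s * L2 χ := by
      refine mul_le_mul_of_nonneg_right ?_ (L2_nonneg χ)
      exact (div_le_div_iff_of_pos_right hs0).mpr hCiCI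
    exact h1.trans h2
  have invLinf0 : ∀ {χ : ℝ → ℝ}, χ ∈ Sp0 r μ D → Linf χ ≤ CI / s * L2 χ := by
    intro χ hχ
    have h1 := (hInv0 χ hχ).2 0 (Nat.zero_le μ)
    rw [pow_zero, one_mul, winf_zero_eq] at h1
    rw [← hsdef] at h1
    have h2 : Ci / s * L2 χ ≤ CI / s * L2 χ := by
      refine mul_le_mul_of_nonneg_right ?_ (L2_nonneg χ)
      exact (div_le_div_iff_of_pos_right hs0).mpr hCiCI
    exact h1.trans h2
  -- coefficient inequalities
  have hA1 : CI * KK * σ ≤ CQ := by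
    obtain ⟨p1, p2, p3⟩ := hCQpieces
    linarith [hCQ.le, hCQ.ge]
  have hA2 : (1 + MB) * CI ≤ CQ := by
    obtain ⟨p1, p2, p3⟩ := hCQpieces
    linarith [hCQ.le, hCQ.ge]
  have hA3 : CI * MB ≤ CQ := by
    obtain ⟨p1, p2, p3⟩ := hCQpieces
    linarith [hCQ.le, hCQ.ge]
  have hA4 : CI ≤ CQ := by
    obtain ⟨p1, p2, p3⟩ := hCQpieces
    linarith [hCQ.le, hCQ.ge]
  have hCQ0 : 0 ≤ CQ := by linarith
  have hcoef1 : CI * KK / s ≤ CQ / D.h := by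
    rw [div_le_div_iff₀ hs0 hh0]
    have e1 : 0 ≤ CI * KK := by positivity
    have h2 : CI * KK * s ≤ CI * KK * σ := mul_le_mul_of_nonneg_left hsσ e1
    have h3 : CI * KK * s ≤ CQ := h2.trans hA1
    calc CI * KK * D.h = (CI * KK * s) * s := by rw [← hss]; ring
      _ ≤ CQ * s := mul_le_mul_of_nonneg_right h3 hs0.le
  have hcoef2 : (1 + MB) * CI / D.h ≤ CQ / D.h := (div_le_div_iff_of_pos_right hh0).mpr hA2
  have hcoef3 : CI * MB / D.h ≤ CQ / D.h := (div_le_div_iff_of_pos_right hh0).mpr hA3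
  have hcoef4 : CI / D.h ≤ CQ / D.h := (div_le_div_iff_of_pos_right hh0).mpr hA4
  have hCQh0 : 0 ≤ CQ / D.h := div_nonneg hCQ0 hh0.le
  have adm1Hn : Adm (fun x => 1 + Hn x) :=
    adm_of_continuousOn (continuousOn_const.add hHncont)
  -- the key one-step estimate
  have key : ∀ φ ψ : ℝ → ℝ, φ ∈ Sp0 r μ D → ψ ∈ Sp r μ D →
      Adm (deriv (fun x => (1 + Hn x) * φ x + Un x * ψ x)) ∧
      Adm (deriv (fun x => ψ x + Un x * φ x)) ∧
      L2 (deriv (fun x => (1 + Hn x) * φ x + Un x * ψ x))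
        + L2 (deriv (fun x => ψ x + Un x * φ x)) ≤ C2 / D.h * (L2 φ + L2 ψ) := by
    intro φ ψ hφ hψ
    have hφC1 : ContDiffOn ℝ 1 φ (Icc 0 1) := spC1 hφ.1
    have hψC1 : ContDiffOn ℝ 1 ψ (Icc 0 1) := spC1 hψ
    have hφcont : ContinuousOn φ (Icc 0 1) := hφC1.continuousOn
    have hψcont : ContinuousOn ψ (Icc 0 1) := hψC1.continuousOn
    have admφ : Adm φ := adm_of_continuousOn hφcont
    have admψ : Adm ψ := adm_of_continuousOn hψcont
    have admdφ : Adm (deriv φ) := spline_deriv_adm hφC1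
    have admdψ : Adm (deriv ψ) := spline_deriv_adm hψC1
    have rep1 : deriv (fun x => (1 + Hn x) * φ x + Un x * ψ x) =ᵐ[nu01]
        fun x => (deriv Hn x * φ x + (1 + Hn x) * deriv φ x)
          + (deriv Un x * ψ x + Un x * deriv ψ x) := by
      filter_upwards [ae_mem_Ioo] with x hx
      have dH := (spline_diffAt hHnC1 hx).hasDerivAt
      have dU := (spline_diffAt hUnC1 hx).hasDerivAt
      have dφ := (spline_diffAt hφC1 hx).hasDerivAt
      have dψ := (spline_diffAt hψC1 hx).hasDerivAt
      exact ((((dH.const_add 1).mul dφ)).add (dU.mul dψ)).deriv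
    have rep2 : deriv (fun x => ψ x + Un x * φ x) =ᵐ[nu01]
        fun x => deriv ψ x + (deriv Un x * φ x + Un x * deriv φ x) := by
      filter_upwards [ae_mem_Ioo] with x hx
      have dU := (spline_diffAt hUnC1 hx).hasDerivAt
      have dφ := (spline_diffAt hφC1 hx).hasDerivAt
      have dψ := (spline_diffAt hψC1 hx).hasDerivAt
      exact (dψ.add (dU.mul dφ)).deriv
    have adm1 : Adm (deriv (fun x => (1 + Hn x) * φ x + Un x * ψ x)) :=
      (((admdHn.mul admφ).add (adm1Hn.mul admdφ)).add
        ((admdUn.mul admψ).add (admUn.mul admdψ))).congr rep1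
    have adm2 : Adm (deriv (fun x => ψ x + Un x * φ x)) :=
      (admdψ.add ((admdUn.mul admφ).add (admUn.mul admdφ))).congr rep2
    refine ⟨adm1, adm2, ?_⟩
    -- a.e. bounds on the bounded factors
    have aeφ : ∀ᵐ x ∂nu01, |φ x| ≤ Linf φ := by
      filter_upwards [ae_mem_Icc] with x hx using le_linf hφcont hx
    have aeψ : ∀ᵐ x ∂nu01, |ψ x| ≤ Linf ψ := by
      filter_upwards [ae_mem_Icc] with x hx using le_linf hψcont hx
    have aeHn1 : ∀ᵐ x ∂nu01, |1 + Hn x| ≤ 1 + MB := by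
      filter_upwards [ae_mem_Icc] with x hx
      calc |1 + Hn x| ≤ |(1:ℝ)| + |Hn x| := abs_add_le _ _
        _ ≤ 1 + MB := by have := hHnb x hx; rw [abs_one]; linarith
    have aeUn : ∀ᵐ x ∂nu01, |Un x| ≤ MB := by
      filter_upwards [ae_mem_Icc] with x hx using hUnb x hx
    -- the seven term estimates, all with coefficient CQ / D.h
    have E1 : L2 (fun x => deriv Hn x * φ x) ≤ CQ / D.h * L2 φ := by
      have hcomm : (fun x => deriv Hn x * φ x) = fun x => φ x * deriv Hn x :=
        funext fun x => mul_comm _ _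
      rw [hcomm]
      have h1 := L2_mul_le admφ admdHn aeφ (linf_nonneg φ)
      have h2 : Linf φ * L2 (deriv Hn) ≤ (CI / s * L2 φ) * KK :=
        mul_le_mul (invLinf0 hφ) hdHnL2 (L2_nonneg _)
          (mul_nonneg (div_nonneg hCI0 hs0.le) (L2_nonneg _))
      have h3 : (CI / s * L2 φ) * KK = (CI * KK / s) * L2 φ := by ring
      have h4 : (CI * KK / s) * L2 φ ≤ CQ / D.h * L2 φ :=
        mul_le_mul_of_nonneg_right hcoef1 (L2_nonneg _)
      linarith [h1, h2, h3.le, h3.ge, h4]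
    have E2 : L2 (fun x => (1 + Hn x) * deriv φ x) ≤ CQ / D.h * L2 φ := by
      have h1 := L2_mul_le adm1Hn admdφ aeHn1 (by linarith : (0:ℝ) ≤ 1 + MB)
      have h2 : (1 + MB) * L2 (deriv φ) ≤ (1 + MB) * (CI / D.h * L2 φ) :=
        mul_le_mul_of_nonneg_left (invL20 hφ) (by linarith)
      have h3 : (1 + MB) * (CI / D.h * L2 φ) = ((1 + MB) * CI / D.h) * L2 φ := by ring
      have h4 : ((1 + MB) * CI / D.h) * L2 φ ≤ CQ / D.h * L2 φ :=
        mul_le_mul_of_nonneg_right hcoef2 (L2_nonneg _)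
      linarith [h1, h2, h3.le, h4]
    have E3 : L2 (fun x => deriv Un x * ψ x) ≤ CQ / D.h * L2 ψ := by
      have hcomm : (fun x => deriv Un x * ψ x) = fun x => ψ x * deriv Un x :=
        funext fun x => mul_comm _ _
      rw [hcomm]
      have h1 := L2_mul_le admψ admdUn aeψ (linf_nonneg ψ)
      have h2 : Linf ψ * L2 (deriv Un) ≤ (CI / s * L2 ψ) * KK :=
        mul_le_mul (invLinf hψ) hdUnL2 (L2_nonneg _)
          (mul_nonneg (div_nonneg hCI0 hs0.le) (L2_nonneg _))
      have h3 : (CI / s * L2 ψ) * KK = (CI * KK / s) * L2 ψ := by ring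
      have h4 : (CI * KK / s) * L2 ψ ≤ CQ / D.h * L2 ψ :=
        mul_le_mul_of_nonneg_right hcoef1 (L2_nonneg _)
      linarith [h1, h2, h3.le, h4]
    have E4 : L2 (fun x => Un x * deriv ψ x) ≤ CQ / D.h * L2 ψ := by
      have h1 := L2_mul_le admUn admdψ aeUn hMB0
      have h2 : MB * L2 (deriv ψ) ≤ MB * (CI / D.h * L2 ψ) :=
        mul_le_mul_of_nonneg_left (invL2 hψ) hMB0
      have h3 : MB * (CI / D.h * L2 ψ) = (CI * MB / D.h) * L2 ψ := by ring
      have h4 : (CI * MB / D.h) * L2 ψ ≤ CQ / D.h * L2 ψ :=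
        mul_le_mul_of_nonneg_right hcoef3 (L2_nonneg _)
      linarith [h1, h2, h3.le, h4]
    have E5 : L2 (deriv ψ) ≤ CQ / D.h * L2 ψ := by
      have h1 := invL2 hψ
      have h2 : CI / D.h * L2 ψ ≤ CQ / D.h * L2 ψ :=
        mul_le_mul_of_nonneg_right hcoef4 (L2_nonneg _)
      linarith
    have E6 : L2 (fun x => deriv Un x * φ x) ≤ CQ / D.h * L2 φ := by
      have hcomm : (fun x => deriv Un x * φ x) = fun x => φ x * deriv Un x :=
        funext fun x => mul_comm _ _
      rw [hcomm]
      have h1 := L2_mul_le admφ admdUn aeφ (linf_nonneg φ)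
      have h2 : Linf φ * L2 (deriv Un) ≤ (CI / s * L2 φ) * KK :=
        mul_le_mul (invLinf0 hφ) hdUnL2 (L2_nonneg _)
          (mul_nonneg (div_nonneg hCI0 hs0.le) (L2_nonneg _))
      have h3 : (CI / s * L2 φ) * KK = (CI * KK / s) * L2 φ := by ring
      have h4 : (CI * KK / s) * L2 φ ≤ CQ / D.h * L2 φ :=
        mul_le_mul_of_nonneg_right hcoef1 (L2_nonneg _)
      linarith [h1, h2, h3.le, h4]
    have E7 : L2 (fun x => Un x * deriv φ x) ≤ CQ / D.h * L2 φ := by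
      have h1 := L2_mul_le admUn admdφ aeUn hMB0
      have h2 : MB * L2 (deriv φ) ≤ MB * (CI / D.h * L2 φ) :=
        mul_le_mul_of_nonneg_left (invL20 hφ) hMB0
      have h3 : MB * (CI / D.h * L2 φ) = (CI * MB / D.h) * L2 φ := by ring
      have h4 : (CI * MB / D.h) * L2 φ ≤ CQ / D.h * L2 φ :=
        mul_le_mul_of_nonneg_right hcoef3 (L2_nonneg _)
      linarith [h1, h2, h3.le, h4]
    -- assemble
    have hρ : L2 (deriv (fun x => (1 + Hn x) * φ x + Un x * ψ x))
        ≤ CQ / D.h * L2 φ + CQ / D.h * L2 φ + (CQ / D.h * L2 ψ + CQ / D.h * L2 ψ) := by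
      rw [L2_congr rep1]
      have t1 : L2 (fun x => (deriv Hn x * φ x + (1 + Hn x) * deriv φ x)
            + (deriv Un x * ψ x + Un x * deriv ψ x))
          ≤ L2 (fun x => deriv Hn x * φ x + (1 + Hn x) * deriv φ x)
            + L2 (fun x => deriv Un x * ψ x + Un x * deriv ψ x) :=
        L2_add_le ((admdHn.mul admφ).add (adm1Hn.mul admdφ))
          ((admdUn.mul admψ).add (admUn.mul admdψ))
      have t2 : L2 (fun x => deriv Hn x * φ x + (1 + Hn x) * deriv φ x)
          ≤ L2 (fun x => deriv Hn x * φ x) + L2 (fun x => (1 + Hn x) * deriv φ x) :=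
        L2_add_le (admdHn.mul admφ) (adm1Hn.mul admdφ)
      have t3 : L2 (fun x => deriv Un x * ψ x + Un x * deriv ψ x)
          ≤ L2 (fun x => deriv Un x * ψ x) + L2 (fun x => Un x * deriv ψ x) :=
        L2_add_le (admdUn.mul admψ) (admUn.mul admdψ)
      linarith [E1, E2, E3, E4]
    have hrr : L2 (deriv (fun x => ψ x + Un x * φ x))
        ≤ CQ / D.h * L2 ψ + (CQ / D.h * L2 φ + CQ / D.h * L2 φ) := by
      rw [L2_congr rep2]
      have t1 : L2 (fun x => deriv ψ x + (deriv Un x * φ x + Un x * deriv φ x))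
          ≤ L2 (deriv ψ) + L2 (fun x => deriv Un x * φ x + Un x * deriv φ x) :=
        L2_add_le admdψ ((admdUn.mul admφ).add (admUn.mul admdφ))
      have t2 : L2 (fun x => deriv Un x * φ x + Un x * deriv φ x)
          ≤ L2 (fun x => deriv Un x * φ x) + L2 (fun x => Un x * deriv φ x) :=
        L2_add_le (admdUn.mul admφ) (admUn.mul admdφ)
      linarith [E5, E6, E7]
    have hfill : 0 ≤ CQ / D.h * L2 ψ := mul_nonneg hCQh0 (L2_nonneg ψ)
    have hC2eq : C2 / D.h * (L2 φ + L2 ψ)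
        = CQ / D.h * L2 φ * 4 + CQ / D.h * L2 ψ * 4 := by
      rw [hC2]; ring
    linarith [hρ, hrr, hfill, hC2eq.le, hC2eq.ge]
  -- the induction on the stages
  have main : ∀ jj : ℕ, ∃ φ ψ : ℝ → ℝ, φ ∈ Sp0 r μ D ∧ ψ ∈ Sp r μ D ∧
      ((rhoPair P P0 Hn Un eps e jj).1 = fun x => (1 + Hn x) * φ x + Un x * ψ x) ∧
      ((rhoPair P P0 Hn Un eps e jj).2 = fun x => ψ x + Un x * φ x) ∧
      L2 φ + L2 ψ ≤ (C2 / D.h) ^ jj * (L2 eps + L2 e) := by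
    intro jj
    induction jj with
    | zero =>
      refine ⟨e, eps, he, heps, rfl, rfl, ?_⟩
      rw [pow_zero, one_mul]
      linarith
    | succ m ihm =>
      obtain ⟨φ, ψ, hφ, hψ, h1, h2, hb⟩ := ihm
      refine ⟨P0 (deriv (rhoPair P P0 Hn Un eps e m).2),
        P (deriv (rhoPair P P0 Hn Un eps e m).1), hP0.1 _, hP.1 _, rfl, rfl, ?_⟩
      obtain ⟨adm1, adm2, hkey⟩ := key φ ψ hφ hψ
      have hv1 : Adm (deriv (rhoPair P P0 Hn Un eps e m).1) := by rw [h1]; exact adm1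
      have hv2 : Adm (deriv (rhoPair P P0 Hn Un eps e m).2) := by rw [h2]; exact adm2
      have admP1 : Adm (P0 (deriv (rhoPair P P0 Hn Un eps e m).2)) :=
        adm_of_continuousOn (spC1 (hP0.1 _).1).continuousOn
      have admP2 : Adm (P (deriv (rhoPair P P0 Hn Un eps e m).1)) :=
        adm_of_continuousOn (spC1 (hP.1 _)).continuousOn
      have hL1 : L2 (P0 (deriv (rhoPair P P0 Hn Un eps e m).2))
          ≤ L2 (deriv (rhoPair P P0 Hn Un eps e m).2) := proj_L2_le hP0 hv2 admP1
      have hL2' : L2 (P (deriv (rhoPair P P0 Hn Un eps e m).1))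
          ≤ L2 (deriv (rhoPair P P0 Hn Un eps e m).1) := proj_L2_le hP hv1 admP2
      have hkey' : L2 (deriv (rhoPair P P0 Hn Un eps e m).1)
          + L2 (deriv (rhoPair P P0 Hn Un eps e m).2) ≤ C2 / D.h * (L2 φ + L2 ψ) := by
        rw [h1, h2]; exact hkey
      have hstep : L2 (P0 (deriv (rhoPair P P0 Hn Un eps e m).2))
          + L2 (P (deriv (rhoPair P P0 Hn Un eps e m).1))
          ≤ C2 / D.h * ((C2 / D.h) ^ m * (L2 eps + L2 e)) := by
        have := mul_le_mul_of_nonneg_left hb (div_nonneg hC20 hh0.le)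
        linarith
      have hpow : C2 / D.h * ((C2 / D.h) ^ m * (L2 eps + L2 e))
          = (C2 / D.h) ^ (m + 1) * (L2 eps + L2 e) := by ring
      linarith [hstep, hpow.le]
  -- conclusion
  obtain ⟨φ, ψ, hφ, hψ, h1, h2, hb⟩ := main j
  obtain ⟨adm1, adm2, hkey⟩ := key φ ψ hφ hψ
  rw [h1, h2]
  have hstep : L2 (deriv fun x => (1 + Hn x) * φ x + Un x * ψ x)
      + L2 (deriv fun x => ψ x + Un x * φ x)
      ≤ C2 / D.h * ((C2 / D.h) ^ j * (L2 eps + L2 e)) := by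
    have := mul_le_mul_of_nonneg_left hb (div_nonneg hC20 hh0.le)
    linarith [hkey]
  have heq1 : C2 / D.h * ((C2 / D.h) ^ j * (L2 eps + L2 e))
      = C2 ^ (j + 1) / D.h ^ (j + 1) * (L2 eps + L2 e) := by
    rw [← div_pow]
    ring
  have hple : C2 ^ (j + 1) ≤ C2 ^ 4 := pow_le_pow_right₀ (by linarith) (by omega)
  have hfin : C2 ^ (j + 1) / D.h ^ (j + 1) * (L2 eps + L2 e)
      ≤ C2 ^ 4 / D.h ^ (j + 1) * (L2 eps + L2 e) := by
    refine mul_le_mul_of_nonneg_right ?_ (add_nonneg (L2_nonneg _) (L2_nonneg _))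
    exact (div_le_div_iff_of_pos_right (pow_pos hh0 _)).mpr hple
  linarith [hstep, heq1.le, hfin]

end
end

section
/- For i = -1, 0, 1, 2 the following identity holds: (P[(rho^{n,i})_x], (rho^{n,i+1})_x) + ((1 + H^n) P_0[(r^{n,i})_x], (r^{n,i+1})_x) = (1/2) gamma_i^{n,i}. -/
open MeasureTheory Set

noncomputable section

/-! ### Auxiliary lemmas for the proof -/

lemma ae_ne_one : ∀ᵐ x : ℝ ∂volume, x ≠ (1:ℝ) := by
  refine MeasureTheory.ae_iff.mpr ?_; simp

lemma hda_of_contDiffOn {f : ℝ → ℝ} (hf : ContDiffOn ℝ 1 f (Icc 0 1)) {x : ℝ}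
    (hx : x ∈ Ioo (0:ℝ) 1) : HasDerivAt f (derivWithin f (Icc 0 1) x) x := by
  have h1 : Icc (0:ℝ) 1 ∈ nhds x := Icc_mem_nhds hx.1 hx.2
  exact (((hf.differentiableOn one_ne_zero) x ⟨hx.1.le, hx.2.le⟩).hasDerivWithinAt).hasDerivAt h1

lemma contOn_derivWithin {f : ℝ → ℝ} (hf : ContDiffOn ℝ 1 f (Icc 0 1)) :
    ContinuousOn (derivWithin f (Icc 0 1)) (Icc 0 1) :=
  hf.continuousOn_derivWithin (uniqueDiffOn_Icc one_pos) le_rfl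

lemma sq_int_zero (d : ℝ → ℝ) (hd : ContinuousOn d (Icc 0 1))
    (h0 : ip d d = 0) : ∀ x ∈ Icc (0:ℝ) 1, d x = 0 := by
  by_contra hcon
  push_neg at hcon
  obtain ⟨x₀, hx₀, hne⟩ := hcon
  set cc : ℝ := d x₀ * d x₀ / 2 with hcc
  have hcpos : 0 < cc := by
    have := mul_self_pos.mpr hne; positivity
  have hdd : ContinuousOn (fun y => d y * d y) (Icc 0 1) := hd.mul hd
  have hcw : ContinuousWithinAt (fun y => d y * d y) (Icc 0 1) x₀ := hdd x₀ hx₀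
  rw [Metric.continuousWithinAt_iff] at hcw
  obtain ⟨δ, hδ, hball⟩ := hcw cc hcpos
  set a := max 0 (x₀ - δ/2) with ha
  set b := min 1 (x₀ + δ/2) with hb
  have h0a : (0:ℝ) ≤ a := le_max_left _ _
  have hb1 : b ≤ 1 := min_le_left _ _
  have hax : a ≤ x₀ := max_le hx₀.1 (by linarith)
  have hxb : x₀ ≤ b := le_min hx₀.2 (by linarith)
  have hab : a < b := by
    rcases le_or_gt (x₀ + δ/2) 1 with h | h
    · have : b = x₀ + δ/2 := min_eq_right h
      linarith
    · have hbv : b = 1 := min_eq_left h.le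
      have : a < 1 := max_lt one_pos (by linarith [hx₀.2])
      linarith
  have hsub : Icc a b ⊆ Icc (0:ℝ) 1 := fun y hy => ⟨le_trans h0a hy.1, le_trans hy.2 hb1⟩
  have hlow : ∀ y ∈ Icc a b, cc ≤ d y * d y := by
    intro y hy
    have hdy : dist y x₀ < δ := by
      have hbu : b ≤ x₀ + δ/2 := min_le_right _ _
      have hal : x₀ - δ/2 ≤ a := le_max_right _ _
      rw [Real.dist_eq, abs_sub_lt_iff]
      constructor <;> linarith [hy.1, hy.2]
    have := hball (hsub hy) hdy
    rw [Real.dist_eq, abs_sub_lt_iff] at this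
    nlinarith [this.1, this.2]
  have hi1 : IntervalIntegrable (fun y => d y * d y) volume 0 a := by
    apply ContinuousOn.intervalIntegrable
    apply hdd.mono
    rw [uIcc_of_le h0a]
    exact Icc_subset_Icc le_rfl (by linarith)
  have hi2 : IntervalIntegrable (fun y => d y * d y) volume a b := by
    apply ContinuousOn.intervalIntegrable
    apply hdd.mono
    rw [uIcc_of_le hab.le]
    exact hsub
  have hi3 : IntervalIntegrable (fun y => d y * d y) volume b 1 := by
    apply ContinuousOn.intervalIntegrable
    apply hdd.mono
    rw [uIcc_of_le hb1]
    exact Icc_subset_Icc (by linarith) le_rfl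
  have hsplit : ip d d = (∫ y in (0:ℝ)..a, d y * d y) + (∫ y in a..b, d y * d y)
      + (∫ y in b..(1:ℝ), d y * d y) := by
    rw [ip]
    rw [← intervalIntegral.integral_add_adjacent_intervals (hi1.trans hi2) hi3,
      ← intervalIntegral.integral_add_adjacent_intervals hi1 hi2]
  have hn1 : 0 ≤ ∫ y in (0:ℝ)..a, d y * d y :=
    intervalIntegral.integral_nonneg h0a (fun u _ => mul_self_nonneg _)
  have hn3 : 0 ≤ ∫ y in b..(1:ℝ), d y * d y :=
    intervalIntegral.integral_nonneg hb1 (fun u _ => mul_self_nonneg _)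
  have hmid : cc * (b - a) ≤ ∫ y in a..b, d y * d y := by
    have := intervalIntegral.integral_mono_on hab.le intervalIntegrable_const hi2 hlow
    rwa [intervalIntegral.integral_const, smul_eq_mul, mul_comm] at this
  nlinarith [hsplit, hn1, hn3, hmid, hcpos, hab]

lemma Sp_sub {r μ : ℕ} {c : ℝ} {D : Disc c} {φ ψ : ℝ → ℝ}
    (hφ : φ ∈ Sp r μ D) (hψ : ψ ∈ Sp r μ D) : (fun x => φ x - ψ x) ∈ Sp r μ D := by
  refine ⟨hφ.1.sub hψ.1, fun i => ?_⟩
  obtain ⟨p, hp, hpe⟩ := hφ.2 i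
  obtain ⟨q, hq, hqe⟩ := hψ.2 i
  refine ⟨p - q, le_trans (Polynomial.natDegree_sub_le p q) (sup_le hp hq), fun t ht => ?_⟩
  simp [hpe t ht, hqe t ht]

lemma Sp0_sub {r μ : ℕ} {c : ℝ} {D : Disc c} {φ ψ : ℝ → ℝ}
    (hφ : φ ∈ Sp0 r μ D) (hψ : ψ ∈ Sp0 r μ D) : (fun x => φ x - ψ x) ∈ Sp0 r μ D := by
  refine ⟨Sp_sub hφ.1 hψ.1, by simp [hφ.2.1, hψ.2.1], by simp [hφ.2.2, hψ.2.2]⟩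

lemma proj_eqOn {r μ : ℕ} {c : ℝ} {D : Disc c} {P : (ℝ → ℝ) → (ℝ → ℝ)}
    (hP : IsL2Proj (Sp r μ D) P) (v w : ℝ → ℝ) (hw : w ∈ Sp r μ D)
    (hvw : ∀ x ∈ Ioo (0:ℝ) 1, v x = w x) : ∀ x ∈ Icc (0:ℝ) 1, P v x = w x := by
  have hPv := hP.1 v
  set d := fun x => P v x - w x with hd
  have hdS : d ∈ Sp r μ D := Sp_sub hPv hw
  have h0 : ip (fun x => v x - P v x) d = 0 := hP.2.1 v d hdS
  have heq : ip (fun x => v x - P v x) d = - ip d d := by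
    rw [ip, ip, ← intervalIntegral.integral_neg]
    apply intervalIntegral.integral_congr_ae
    filter_upwards [ae_ne_one] with x hx1 hxI
    rw [Set.uIoc_of_le (by norm_num : (0:ℝ) ≤ 1)] at hxI
    have hxo : x ∈ Ioo (0:ℝ) 1 := ⟨hxI.1, lt_of_le_of_ne hxI.2 hx1⟩
    rw [hvw x hxo]
    simp only [hd]
    ring
  have hdd : ip d d = 0 := by linarith [h0, heq.symm.trans h0]
  have hcont : ContinuousOn d (Icc 0 1) := hdS.1.continuousOn
  intro x hx
  have := sq_int_zero d hcont hdd x hx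
  simp only [hd] at this
  linarith

lemma proj0_eqOn {r μ : ℕ} {c : ℝ} {D : Disc c} {P0 : (ℝ → ℝ) → (ℝ → ℝ)}
    (hP0 : IsL2Proj (Sp0 r μ D) P0) (v w : ℝ → ℝ) (hw : w ∈ Sp0 r μ D)
    (hvw : ∀ x ∈ Ioo (0:ℝ) 1, v x = w x) : ∀ x ∈ Icc (0:ℝ) 1, P0 v x = w x := by
  have hPv := hP0.1 v
  set d := fun x => P0 v x - w x with hd
  have hdS : d ∈ Sp0 r μ D := Sp0_sub hPv hw
  have h0 : ip (fun x => v x - P0 v x) d = 0 := hP0.2.1 v d hdS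
  have heq : ip (fun x => v x - P0 v x) d = - ip d d := by
    rw [ip, ip, ← intervalIntegral.integral_neg]
    apply intervalIntegral.integral_congr_ae
    filter_upwards [ae_ne_one] with x hx1 hxI
    rw [Set.uIoc_of_le (by norm_num : (0:ℝ) ≤ 1)] at hxI
    have hxo : x ∈ Ioo (0:ℝ) 1 := ⟨hxI.1, lt_of_le_of_ne hxI.2 hx1⟩
    rw [hvw x hxo]
    simp only [hd]
    ring
  have hdd : ip d d = 0 := by linarith [h0, heq.symm.trans h0]
  have hcont : ContinuousOn d (Icc 0 1) := hdS.1.1.continuousOn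
  intro x hx
  have := sq_int_zero d hcont hdd x hx
  simp only [hd] at this
  linarith

lemma key (Hn Un A B ρ rr : ℝ → ℝ)
    (hHn : ContDiffOn ℝ 1 Hn (Icc 0 1)) (hUn : ContDiffOn ℝ 1 Un (Icc 0 1))
    (hA : ContDiffOn ℝ 1 A (Icc 0 1)) (hB : ContDiffOn ℝ 1 B (Icc 0 1))
    (hUn0 : Un 0 = 0) (hUn1 : Un 1 = 0) (hB0 : B 0 = 0) (hB1 : B 1 = 0)
    (hρ : ∀ x ∈ Icc (0:ℝ) 1, ρ x = (1 + Hn x) * B x + Un x * A x)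
    (hrr : ∀ x ∈ Icc (0:ℝ) 1, rr x = A x + Un x * B x) :
    ip A (deriv ρ) + ip (fun x => (1 + Hn x) * B x) (deriv rr)
      = 1 / 2 * (ip (fun x => deriv Un x * A x) A
        + ip (fun x => ((1 + Hn x) * deriv Un x - deriv Hn x * Un x) * B x) B) := by
  have hAc : ContinuousOn A (Icc (0:ℝ) 1) := hA.continuousOn
  have hBc : ContinuousOn B (Icc (0:ℝ) 1) := hB.continuousOn
  have hHnc : ContinuousOn Hn (Icc (0:ℝ) 1) := hHn.continuousOn
  have hUnc : ContinuousOn Un (Icc (0:ℝ) 1) := hUn.continuousOn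
  set A' := derivWithin A (Icc (0:ℝ) 1) with hA'
  set B' := derivWithin B (Icc (0:ℝ) 1) with hB'
  set Hn' := derivWithin Hn (Icc (0:ℝ) 1) with hHn'
  set Un' := derivWithin Un (Icc (0:ℝ) 1) with hUn'
  have hA'c : ContinuousOn A' (Icc (0:ℝ) 1) := contOn_derivWithin hA
  have hB'c : ContinuousOn B' (Icc (0:ℝ) 1) := contOn_derivWithin hB
  have hHn'c : ContinuousOn Hn' (Icc (0:ℝ) 1) := contOn_derivWithin hHn
  have hUn'c : ContinuousOn Un' (Icc (0:ℝ) 1) := contOn_derivWithin hUn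
  -- derivatives on Ioo
  have hdρ : ∀ x ∈ Ioo (0:ℝ) 1, HasDerivAt ρ
      (Hn' x * B x + (1 + Hn x) * B' x + Un' x * A x + Un x * A' x) x := by
    intro x hx
    have hf : HasDerivAt (fun y => (1 + Hn y) * B y + Un y * A y)
        (Hn' x * B x + (1 + Hn x) * B' x + Un' x * A x + Un x * A' x) x := by
      have := (((hasDerivAt_const x (1:ℝ)).add (hda_of_contDiffOn hHn hx)).mul
        (hda_of_contDiffOn hB hx)).add
        ((hda_of_contDiffOn hUn hx).mul (hda_of_contDiffOn hA hx))
      refine this.congr_deriv ?_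
      simp only [Pi.add_apply, Pi.mul_apply]
      ring
    apply hf.congr_of_eventuallyEq
    filter_upwards [isOpen_Ioo.mem_nhds hx] with y hy
    exact hρ y (Ioo_subset_Icc_self hy)
  have hdrr : ∀ x ∈ Ioo (0:ℝ) 1, HasDerivAt rr
      (A' x + Un' x * B x + Un x * B' x) x := by
    intro x hx
    have hf : HasDerivAt (fun y => A y + Un y * B y)
        (A' x + Un' x * B x + Un x * B' x) x := by
      have := (hda_of_contDiffOn hA hx).add
        ((hda_of_contDiffOn hUn hx).mul (hda_of_contDiffOn hB hx))
      refine this.congr_deriv ?_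
      ring
    apply hf.congr_of_eventuallyEq
    filter_upwards [isOpen_Ioo.mem_nhds hx] with y hy
    exact hrr y (Ioo_subset_Icc_self hy)
  -- the four continuous integrands
  set F1 : ℝ → ℝ := fun x =>
    A x * (Hn' x * B x + (1 + Hn x) * B' x + Un' x * A x + Un x * A' x) with hF1
  set F2 : ℝ → ℝ := fun x =>
    (1 + Hn x) * B x * (A' x + Un' x * B x + Un x * B' x) with hF2
  set F3 : ℝ → ℝ := fun x => Un' x * A x * A x with hF3
  set F4 : ℝ → ℝ := fun x =>
    ((1 + Hn x) * Un' x - Hn' x * Un x) * B x * B x with hF4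
  have hF1c : ContinuousOn F1 (Icc (0:ℝ) 1) := by
    apply hAc.mul
    exact (((hHn'c.mul hBc).add (((continuousOn_const.add hHnc)).mul hB'c)).add
      (hUn'c.mul hAc)).add (hUnc.mul hA'c)
  have hF2c : ContinuousOn F2 (Icc (0:ℝ) 1) := by
    exact ((continuousOn_const.add hHnc).mul hBc).mul
      ((hA'c.add (hUn'c.mul hBc)).add (hUnc.mul hB'c))
  have hF3c : ContinuousOn F3 (Icc (0:ℝ) 1) := (hUn'c.mul hAc).mul hAc
  have hF4c : ContinuousOn F4 (Icc (0:ℝ) 1) := by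
    exact ((((continuousOn_const.add hHnc).mul hUn'c).sub (hHn'c.mul hUnc)).mul hBc).mul hBc
  have intOf : ∀ {F : ℝ → ℝ}, ContinuousOn F (Icc (0:ℝ) 1) →
      IntervalIntegrable F volume 0 1 := by
    intro F hF
    apply hF.mono ?_ |>.intervalIntegrable
    rw [uIcc_of_le (by norm_num : (0:ℝ) ≤ 1)]
  -- rewrite the four ip's
  have congrIoo : ∀ {f g : ℝ → ℝ} {F : ℝ → ℝ},
      (∀ x ∈ Ioo (0:ℝ) 1, f x * g x = F x) →
      ip f g = ∫ x in (0:ℝ)..1, F x := by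
    intro f g F h
    rw [ip]
    apply intervalIntegral.integral_congr_ae
    filter_upwards [ae_ne_one] with x hx1 hxI
    rw [Set.uIoc_of_le (by norm_num : (0:ℝ) ≤ 1)] at hxI
    exact h x ⟨hxI.1, lt_of_le_of_ne hxI.2 hx1⟩
  have e1 : ip A (deriv ρ) = ∫ x in (0:ℝ)..1, F1 x := by
    apply congrIoo
    intro x hx
    rw [(hdρ x hx).deriv]
  have e2 : ip (fun x => (1 + Hn x) * B x) (deriv rr) = ∫ x in (0:ℝ)..1, F2 x := by
    apply congrIoo
    intro x hx
    rw [(hdrr x hx).deriv]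
  have e3 : ip (fun x => deriv Un x * A x) A = ∫ x in (0:ℝ)..1, F3 x := by
    apply congrIoo
    intro x hx
    rw [(hda_of_contDiffOn hUn hx).deriv]
  have e4 : ip (fun x => ((1 + Hn x) * deriv Un x - deriv Hn x * Un x) * B x) B
      = ∫ x in (0:ℝ)..1, F4 x := by
    apply congrIoo
    intro x hx
    rw [(hda_of_contDiffOn hUn hx).deriv, (hda_of_contDiffOn hHn hx).deriv]
  -- the FTC part
  set G : ℝ → ℝ := fun x => (1 + Hn x) * A x * B x + 1/2 * (Un x * A x * A x)
    + 1/2 * ((1 + Hn x) * Un x * B x * B x) with hG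
  have hGc : ContinuousOn G (Icc (0:ℝ) 1) := by
    exact ((((continuousOn_const.add hHnc).mul hAc).mul hBc).add
      (continuousOn_const.mul ((hUnc.mul hAc).mul hAc))).add
      (continuousOn_const.mul ((((continuousOn_const.add hHnc).mul hUnc).mul hBc).mul hBc))
  have hG0 : G 0 = 0 := by simp [hG, hUn0, hB0]
  have hG1 : G 1 = 0 := by simp [hG, hUn1, hB1]
  set E : ℝ → ℝ := fun x => F1 x + F2 x - 1/2 * (F3 x + F4 x) with hE
  have hEc : ContinuousOn E (Icc (0:ℝ) 1) :=
    (hF1c.add hF2c).sub (continuousOn_const.mul (hF3c.add hF4c))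
  have hGE : ∀ x ∈ Ioo (0:ℝ) 1, HasDerivAt G (E x) x := by
    intro x hx
    have hdA := hda_of_contDiffOn hA hx
    have hdB := hda_of_contDiffOn hB hx
    have hdHn := hda_of_contDiffOn hHn hx
    have hdUn := hda_of_contDiffOn hUn hx
    have h1 := (((hasDerivAt_const x (1:ℝ)).add hdHn).mul hdA).mul hdB
    have h2 := (((hdUn.mul hdA).mul hdA).const_mul (1/2 : ℝ))
    have h3 := (((((hasDerivAt_const x (1:ℝ)).add hdHn).mul hdUn).mul hdB).mul hdB).const_mul
      (1/2 : ℝ)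
    have := (h1.add h2).add h3
    refine this.congr_deriv ?_
    simp only [hE, hF1, hF2, hF3, hF4, Pi.add_apply, Pi.mul_apply]
    ring
  have hFTC : ∫ x in (0:ℝ)..1, E x = 0 := by
    rw [intervalIntegral.integral_eq_sub_of_hasDeriv_right_of_le (by norm_num) hGc
      (fun x hx => (hGE x hx).hasDerivWithinAt) (intOf hEc), hG1, hG0, sub_zero]
  have hsplit : ∫ x in (0:ℝ)..1, E x = (∫ x in (0:ℝ)..1, F1 x) + (∫ x in (0:ℝ)..1, F2 x)
      - 1/2 * ((∫ x in (0:ℝ)..1, F3 x) + (∫ x in (0:ℝ)..1, F4 x)) := by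
    rw [hE]
    rw [intervalIntegral.integral_sub ((intOf hF1c).add (intOf hF2c))
      (((intOf hF3c).add (intOf hF4c)).const_mul (1/2 : ℝ)),
      intervalIntegral.integral_add (intOf hF1c) (intOf hF2c),
      intervalIntegral.integral_const_mul,
      intervalIntegral.integral_add (intOf hF3c) (intOf hF4c)]
  rw [e1, e2, e3, e4]
  rw [hsplit] at hFTC
  linarith

lemma main_step {r μ : ℕ} {c : ℝ} {D : Disc c} {P P0 : (ℝ → ℝ) → (ℝ → ℝ)} (hμ1 : 1 ≤ μ)
    (hP : IsL2Proj (Sp r μ D) P) (hP0 : IsL2Proj (Sp0 r μ D) P0)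
    {Hn Un : ℝ → ℝ} (hHnS : Hn ∈ Sp r μ D) (hUnS : Un ∈ Sp0 r μ D)
    (eps e : ℝ → ℝ) (m : ℕ) :
    ip (P (deriv (rhoPair P P0 Hn Un eps e m).1)) (deriv (rhoPair P P0 Hn Un eps e (m+1)).1)
      + ip (fun x => (1 + Hn x) * P0 (deriv (rhoPair P P0 Hn Un eps e m).2) x)
          (deriv (rhoPair P P0 Hn Un eps e (m+1)).2)
      = 1 / 2 * (ip (fun x => deriv Un x * P (deriv (rhoPair P P0 Hn Un eps e m).1) x)
          (P (deriv (rhoPair P P0 Hn Un eps e m).1))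
        + ip (fun x => ((1 + Hn x) * deriv Un x - deriv Hn x * Un x)
            * P0 (deriv (rhoPair P P0 Hn Un eps e m).2) x)
          (P0 (deriv (rhoPair P P0 Hn Un eps e m).2))) := by
  have hcast : (1 : WithTop ℕ∞) ≤ (μ : WithTop ℕ∞) := by exact_mod_cast hμ1
  have hmem : ∀ {φ : ℝ → ℝ}, φ ∈ Sp r μ D → ContDiffOn ℝ 1 φ (Icc 0 1) := fun h =>
    h.1.of_le hcast
  have hAS : P (deriv (rhoPair P P0 Hn Un eps e m).1) ∈ Sp r μ D := hP.1 _
  have hBS : P0 (deriv (rhoPair P P0 Hn Un eps e m).2) ∈ Sp0 r μ D := hP0.1 _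
  exact key Hn Un _ _ _ _ (hmem hHnS) (hmem hUnS.1) (hmem hAS) (hmem hBS.1)
    hUnS.2.1 hUnS.2.2 hBS.2.1 hBS.2.2 (fun x _ => rfl) (fun x _ => rfl)



/-- Lemma 4.3, identity (4.12), for i = -1, 0, 1, 2. -/
theorem stmt14 (r μ : ℕ) (hr : 3 ≤ r) (hμ1 : 1 ≤ μ) (hμ2 : μ ≤ r - 2)
    (c T α : ℝ) (hc : 0 < c) (hT : 0 < T) (hα : 0 < α)
    (η u : ℝ → ℝ → ℝ) (hsol : SWSolution T α η u) :
    ∀ (D : Disc c) (P P0 : (ℝ → ℝ) → (ℝ → ℝ)) (k : ℝ) (M : ℕ),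
      IsL2Proj (Sp r μ D) P → IsL2Proj (Sp0 r μ D) P0 →
      0 < k → k * M = T →
      ∀ n : ℕ, n ≤ M → ∀ eps ∈ Sp r μ D, ∀ e ∈ Sp0 r μ D,
      ∀ i : ℤ, -1 ≤ i → i ≤ 2 →
      let Hn := P (η ((n : ℝ) * k))
      let Un := P0 (u ((n : ℝ) * k))
      let rp := rhoPairZ P P0 Hn Un eps e
      ip (P (deriv (rp i).1)) (deriv (rp (i + 1)).1)
          + ip (fun x => (1 + Hn x) * P0 (deriv (rp i).2) x) (deriv (rp (i + 1)).2)
        = 1 / 2 * gammaZ P P0 Hn Un eps e i i := by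
  intro D P P0 k M hP hP0 hk hkM n hn eps heps e he i hi1 hi2
  intro Hn Un rp
  have hcast : (1 : WithTop ℕ∞) ≤ (μ : WithTop ℕ∞) := by exact_mod_cast hμ1
  have hmem : ∀ {φ : ℝ → ℝ}, φ ∈ Sp r μ D → ContDiffOn ℝ 1 φ (Icc 0 1) := fun h =>
    h.1.of_le hcast
  have hHnS : Hn ∈ Sp r μ D := hP.1 _
  have hUnS : Un ∈ Sp0 r μ D := hP0.1 _
  unfold rp
  interval_cases i
  · -- i = -1
    simp only [gammaZ, rhoPairZ]
    norm_num
    -- identify the projections of the derivatives of the antiderivatives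
    have hdint : ∀ (f : ℝ → ℝ), ContinuousOn f (Icc (0:ℝ) 1) →
        ∀ x ∈ Ioo (0:ℝ) 1, deriv (fun y => ∫ t in (0:ℝ)..y, f t) x = f x := by
      intro f hf x hx
      have hci : IntervalIntegrable f volume 0 x := by
        apply (hf.mono ?_).intervalIntegrable
        rw [uIcc_of_le hx.1.le]
        exact Icc_subset_Icc le_rfl hx.2.le
      have hms : StronglyMeasurableAtFilter f (nhds x) volume :=
        ContinuousOn.stronglyMeasurableAtFilter isOpen_Ioo (hf.mono Ioo_subset_Icc_self) x hx
      have hca : ContinuousAt f x := hf.continuousAt (Icc_mem_nhds hx.1 hx.2)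
      exact (intervalIntegral.integral_hasDerivAt_right hci hms hca).deriv
    have hAe : ∀ x ∈ Icc (0:ℝ) 1,
        P (deriv (fun y => ∫ t in (0:ℝ)..y, eps t)) x = eps x :=
      proj_eqOn hP _ eps heps (hdint eps heps.1.continuousOn)
    have hBe : ∀ x ∈ Icc (0:ℝ) 1,
        P0 (deriv (fun y => ∫ t in (0:ℝ)..y, e t)) x = e x :=
      proj0_eqOn hP0 _ e he (hdint e he.1.1.continuousOn)
    have hAS : P (deriv (fun y => ∫ t in (0:ℝ)..y, eps t)) ∈ Sp r μ D := hP.1 _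
    have hBS : P0 (deriv (fun y => ∫ t in (0:ℝ)..y, e t)) ∈ Sp0 r μ D := hP0.1 _
    apply key Hn Un _ _ _ _ (hmem hHnS) (hmem hUnS.1) (hmem hAS) (hmem hBS.1)
      hUnS.2.1 hUnS.2.2 hBS.2.1 hBS.2.2
    · intro x hx
      show (1 + Hn x) * e x + Un x * eps x = _
      rw [hAe x hx, hBe x hx]
    · intro x hx
      show eps x + Un x * e x = _
      rw [hAe x hx, hBe x hx]
  · -- i = 0
    simp only [gammaZ, rhoPairZ]
    norm_num
    exact main_step hμ1 hP hP0 hHnS hUnS eps e 0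
  · -- i = 1
    simp only [gammaZ, rhoPairZ]
    norm_num
    exact main_step hμ1 hP hP0 hHnS hUnS eps e 1
  · -- i = 2
    simp only [gammaZ, rhoPairZ]
    norm_num
    exact main_step hμ1 hP hP0 hHnS hUnS eps e 2


end
end
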